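/- In the Clifford algebra C₄ (the case n = 4), the elements a = (1 + e₂·e₃)/√2 and b = e₁·e₃ satisfy a⁴ = b² = (ab)² = −1 (and hence a⁸ = 1), and the subgroup of the group of units generated by a and b is isomorphic to the generalized quaternion group Q₁₆ of order 16 (Mathlib's QuaternionGroup 4). -/

import Mathlib

open CliffordAlgebra

/-- The quadratic form `Q(v) = -∑ i, v i ^ 2` on `ℝⁿ = (Fin n → ℝ)`. -/
noncomputable def Qneg (n : ℕ) : QuadraticForm ℝ (Fin n → ℝ) :=
  QuadraticMap.weightedSumSquares ℝ (fun _ : Fin n => (-1 : ℝ))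

/-- The Clifford algebra `Cₙ` of `Qneg n`. -/
noncomputable abbrev Cl (n : ℕ) := CliffordAlgebra (Qneg n)

/-- The generator `eᵢ = ι(εᵢ)`, the image of the `i`-th standard basis vector. -/
noncomputable def e {n : ℕ} (i : Fin n) : Cl n := ι (Qneg n) (Pi.single i 1)

/-- The Clifford conjugate `x̄ = reverse (involute x)`. -/
noncomputable def conj {n : ℕ} (x : Cl n) : Cl n := reverse (involute x)

/-- `x` lies in the spin group `Spin(n)`: it is a unit with `involute x = x` and `x * x̄ = 1`. -/
def InSpin {n : ℕ} (x : Cl n) : Prop :=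
  IsUnit x ∧ involute x = x ∧ x * conj x = 1

/-!
`a = (1 + u)/√2` with `u = e₂e₃` is a square root of `u`, so `a⁴ = u² = -1`, and `b = e₁e₃`
anticommutes with `u`, which gives `a b a = b`. Thus `a` (of order 8) and `b` satisfy the defining
relations `x⁸ = 1`, `y² = x⁴`, `x y x = y` of the dicyclic group `Q₁₆`. The resulting surjection
from `Q₁₆` onto `⟨a, b⟩` is injective: a kernel element `aⁱ` is trivial since `orderOf a = 8`, and
one of the form `b aⁱ` would make `b` a power of `a`, forcing `a² = 1`.
-/

namespace QuaternionGroup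

variable {n : ℕ} {G : Type*} [Group G] {x y : G}

lemma pow_val_natCast (hx : orderOf x = 2 * n) (k : ℕ) :
    x ^ (k : ZMod (2 * n)).val = x ^ k := by
  rw [pow_eq_pow_iff_modEq, hx, ZMod.val_natCast]
  exact Nat.mod_modEq _ _

lemma pow_mul_eq_mul_inv_pow (hxy : x * y * x = y) (m : ℕ) : x ^ m * y = y * (x ^ m)⁻¹ := by
  have h : SemiconjBy y x⁻¹ x := (eq_mul_inv_of_mul_eq hxy).symm
  rw [← inv_pow]
  exact (h.pow_right m).symm

variable [NeZero n]

lemma pow_val_add (hx : orderOf x = 2 * n) (i j : ZMod (2 * n)) :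
    x ^ (i + j).val = x ^ i.val * x ^ j.val := by
  rw [← pow_add, pow_eq_pow_iff_modEq, hx, ZMod.val_add]
  exact Nat.mod_modEq _ _

lemma pow_val_sub (hx : orderOf x = 2 * n) (i j : ZMod (2 * n)) :
    x ^ (j - i).val = (x ^ i.val)⁻¹ * x ^ j.val := by
  rw [eq_inv_mul_iff_mul_eq, ← pow_val_add hx, add_sub_cancel]

lemma closure_a_one_xa_zero : Subgroup.closure {a 1, xa 0} = (⊤ : Subgroup (QuaternionGroup n)) := by
  have ha : ∀ i : ZMod (2 * n), a i ∈ Subgroup.closure {a 1, xa (0 : ZMod (2 * n))} := fun i => by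
    rw [← ZMod.natCast_zmod_val i, ← a_one_pow]
    exact pow_mem (Subgroup.subset_closure (Set.mem_insert _ _)) _
  refine eq_top_iff.mpr fun g _ => ?_
  rcases g with i | i
  · exact ha i
  · rw [← zero_add i, ← xa_mul_a]
    exact mul_mem (Subgroup.subset_closure (Set.mem_insert_of_mem _ rfl)) (ha i)

def lift (hx : orderOf x = 2 * n) (hy : y ^ 2 = x ^ n) (hxy : x * y * x = y) :
    QuaternionGroup n →* G where
  toFun
    | a i => x ^ i.val
    | xa i => y * x ^ i.val
  map_one' := by
    show x ^ (0 : ZMod (2 * n)).val = 1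
    rw [ZMod.val_zero, pow_zero]
  map_mul' := by
    rintro (i | i) (j | j)
    · simp only [a_mul_a, pow_val_add hx]
    · simp only [a_mul_xa, pow_val_sub hx, ← mul_assoc, pow_mul_eq_mul_inv_pow hxy]
    · simp only [xa_mul_a, pow_val_add hx, mul_assoc]
    · simp only [xa_mul_xa, add_sub_assoc, pow_val_add hx, pow_val_natCast hx, pow_val_sub hx,
        ← hy, sq, mul_assoc, ← mul_assoc (x ^ i.val), pow_mul_eq_mul_inv_pow hxy]

variable (hx : orderOf x = 2 * n) (hy : y ^ 2 = x ^ n) (hxy : x * y * x = y)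

lemma lift_a (i : ZMod (2 * n)) : lift hx hy hxy (a i) = x ^ i.val := rfl

lemma lift_xa (i : ZMod (2 * n)) : lift hx hy hxy (xa i) = y * x ^ i.val := rfl

lemma lift_injective : Function.Injective (lift hx hy hxy) := by
  refine (injective_iff_map_eq_one _).mpr ?_
  rintro (i | i) h
  · rw [lift_a] at h
    have h2n := orderOf_dvd_of_pow_eq_one h
    rw [hx] at h2n
    rw [one_def, (ZMod.val_eq_zero i).mp (Nat.eq_zero_of_dvd_of_lt h2n (ZMod.val_lt i))]
  · rw [lift_xa] at h
    have hy_inv : y = (x ^ i.val)⁻¹ := eq_inv_of_mul_eq_one_left h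
    have hx2 : x ^ 2 = 1 := by
      have hcomm : Commute x y := hy_inv ▸ (Commute.self_pow x i.val).inv_right
      have hxxy : x * x * y = y := by rw [mul_assoc, hcomm.eq, ← mul_assoc, hxy]
      rw [sq, ← mul_eq_right.mp hxxy]
    have hxn : x ^ n = 1 := by
      rw [← hy, hy_inv, inv_pow, ← pow_mul, mul_comm, pow_mul, hx2, one_pow, inv_one]
    have h2n : 2 * n ∣ n := by rw [← hx]; exact orderOf_dvd_of_pow_eq_one hxn
    have hn := NeZero.pos n
    have := Nat.le_of_dvd hn h2n
    omega

lemma range_lift : (lift hx hy hxy).range = Subgroup.closure {x, y} := by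
  have hx1 : lift hx hy hxy (a 1) = x := by
    rw [lift_a]
    simpa using pow_val_natCast hx 1
  have hy0 : lift hx hy hxy (xa 0) = y := by
    rw [lift_xa, ZMod.val_zero, pow_zero, mul_one]
  rw [MonoidHom.range_eq_map, ← closure_a_one_xa_zero, MonoidHom.map_closure, Set.image_pair,
    hx1, hy0]

noncomputable def closureMulEquiv : Subgroup.closure {x, y} ≃* QuaternionGroup n :=
  ((MonoidHom.ofInjective (lift_injective hx hy hxy)).trans
    (MulEquiv.subgroupCongr (range_lift hx hy hxy))).symm

end QuaternionGroup

section RealAlgebra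

variable {A : Type*} [Ring A] [Algebra ℝ A] {u v : A}

lemma neg_one_ne_one_of_nontrivial [Nontrivial A] : (-1 : A) ≠ 1 := by
  have := Algebra.charZero_of_charZero ℝ A
  norm_num

lemma inv_sqrt_two_smul_mul_inv_sqrt_two_smul (p q : A) :
    ((Real.sqrt 2)⁻¹ • p) * ((Real.sqrt 2)⁻¹ • q) = (2 : ℝ)⁻¹ • (p * q) := by
  rw [smul_mul_smul_comm, ← mul_inv, Real.mul_self_sqrt zero_le_two]

lemma inv_sqrt_two_smul_one_add_mul_self (hu : u * u = -1) :
    ((Real.sqrt 2)⁻¹ • (1 + u)) * ((Real.sqrt 2)⁻¹ • (1 + u)) = u := by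
  have h : (1 + u) * (1 + u) = (2 : ℝ) • u := by
    rw [two_smul, mul_add, mul_one, add_mul, one_mul, hu]
    abel
  rw [inv_sqrt_two_smul_mul_inv_sqrt_two_smul, h, smul_smul, inv_mul_cancel₀ two_ne_zero, one_smul]

lemma inv_sqrt_two_smul_one_add_mul_mul_self (hu : u * u = -1) (huv : u * v = -(v * u)) :
    ((Real.sqrt 2)⁻¹ • (1 + u)) * v * ((Real.sqrt 2)⁻¹ • (1 + u)) = v := by
  have huvu : u * v * u = v := by rw [huv, neg_mul, mul_assoc, hu, mul_neg_one, neg_neg]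
  have h : (1 + u) * v * (1 + u) = (2 : ℝ) • v := by
    rw [two_smul, mul_add, mul_one, add_mul, add_mul, one_mul, huvu, huv]
    abel
  rw [smul_mul_assoc, inv_sqrt_two_smul_mul_inv_sqrt_two_smul, h, smul_smul,
    inv_mul_cancel₀ two_ne_zero, one_smul]

end RealAlgebra

section Generators

variable {n : ℕ} {i j k : Fin n}

lemma Qneg_single (i : Fin n) : Qneg n (Pi.single i 1) = -1 := by
  simp [Qneg, QuadraticMap.weightedSumSquares_apply, Pi.single_apply]

lemma Qneg_isOrtho_single (h : i ≠ j) : (Qneg n).IsOrtho (Pi.single i 1) (Pi.single j 1) := by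
  simp [QuadraticMap.isOrtho_def, Qneg, QuadraticMap.weightedSumSquares_apply, Pi.single_apply,
    mul_add, Finset.sum_add_distrib, h, h.symm]

lemma e_mul_self (i : Fin n) : e i * e i = -1 := by
  rw [e, ι_sq_scalar, Qneg_single, map_neg, map_one]

lemma e_mul_e_anticomm (h : i ≠ j) : e i * e j = -(e j * e i) :=
  ι_mul_ι_comm_of_isOrtho (Qneg_isOrtho_single h)

lemma e_mul_e_mul_e_mul_e (hjk : j ≠ k) : e i * e k * (e j * e k) = e i * e j := by
  rw [mul_assoc, ← mul_assoc (e k), e_mul_e_anticomm hjk.symm, neg_mul, mul_assoc (e j),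
    e_mul_self, mul_neg_one, neg_neg]

lemma e_mul_e_mul_self (h : i ≠ j) : e i * e j * (e i * e j) = -1 := by
  rw [e_mul_e_mul_e_mul_e h, e_mul_self]

lemma e_mul_e_anticomm_e_mul_e (hij : i ≠ j) (hik : i ≠ k) (hjk : j ≠ k) :
    e i * e k * (e j * e k) = -(e j * e k * (e i * e k)) := by
  rw [e_mul_e_mul_e_mul_e hjk, e_mul_e_mul_e_mul_e hik, e_mul_e_anticomm hij]

end Generators

/-- In `C₄`, the elements `a = (1 + e₂e₃)/√2` and `b = e₁e₃` satisfy
`a⁴ = b² = (ab)² = -1` (hence `a⁸ = 1`), and the subgroup of the group of units generated by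
`a` and `b` is isomorphic to the generalized quaternion group `Q₁₆` (Mathlib's
`QuaternionGroup 4`). (Indices `1,2,3,4` correspond to `0,1,2,3 : Fin 4`.) -/
theorem stmt4 (a b : Cl 4) (ha : a = (Real.sqrt 2)⁻¹ • (1 + e 1 * e 2)) (hb : b = e 0 * e 2) :
    a ^ 4 = -1 ∧ b ^ 2 = -1 ∧ (a * b) ^ 2 = -1 ∧ a ^ 8 = 1 ∧
      ∃ ua ub : (Cl 4)ˣ, (ua : Cl 4) = a ∧ (ub : Cl 4) = b ∧
        Nonempty ((Subgroup.closure {ua, ub} : Subgroup (Cl 4)ˣ) ≃* QuaternionGroup 4) := by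
  have hu : e 1 * e 2 * (e 1 * e 2) = (-1 : Cl 4) := e_mul_e_mul_self (by decide)
  have huv : e 1 * e 2 * (e 0 * e 2) = -(e 0 * e 2 * (e 1 * e 2) : Cl 4) :=
    e_mul_e_anticomm_e_mul_e (by decide) (by decide) (by decide)
  have ha2 : a * a = e 1 * e 2 := ha ▸ inv_sqrt_two_smul_one_add_mul_self hu
  have haba : a * b * a = b := ha ▸ hb ▸ inv_sqrt_two_smul_one_add_mul_mul_self hu huv
  have hb2 : b ^ 2 = -1 := by rw [sq, hb, e_mul_e_mul_self (by decide)]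
  have ha4 : a ^ 4 = -1 := by rw [pow_mul a 2 2, sq a, ha2, sq, hu]
  have ha8 : a ^ 8 = 1 := by rw [pow_mul a 4 2, ha4, neg_one_sq]
  have hb4 : b ^ 4 = 1 := by rw [pow_mul b 2 2, hb2, neg_one_sq]
  have hab2 : (a * b) ^ 2 = -1 := by rw [sq, ← mul_assoc, haba, ← sq, hb2]
  set ua := (IsUnit.of_pow_eq_one ha8 (by norm_num)).unit
  set ub := (IsUnit.of_pow_eq_one hb4 (by norm_num)).unit
  have hord : orderOf ua = 2 * 4 := by
    rw [← orderOf_units]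
    refine orderOf_eq_prime_pow (p := 2) (n := 2) ?_ ha8
    simpa [ua, ha4] using neg_one_ne_one_of_nontrivial (A := Cl 4)
  have hsq : ub ^ 2 = ua ^ 4 := Units.ext (by simp [ub, ua, hb2, ha4])
  have hrel : ua * ub * ua = ub := Units.ext (by simpa [ub, ua] using haba)
  exact ⟨ha4, hb2, hab2, ha8, ua, ub, rfl, rfl, ⟨QuaternionGroup.closureMulEquiv hord hsq hrel⟩⟩
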